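/- arXiv:1703.04517 — 2 statements merged into one kernel-verified Lean document; each statement's English description precedes it below -/
import Mathlib

section
/- (Lemma 2(i)) For every nonempty K ⊆ I and every m ∈ {1,…,M}, ξ̂_{K|m}^{(n)} converges almost surely to ξ_{K|m} as n → +∞. -/
/-!
`ξ̂_{K|m}^{(n)}` is the plug-in estimator of `ξ_{K|m}`: it is `ξ_{K|m}` evaluated for the
empirical distribution of the first `n` observations, i.e. for the uniform distribution on
`{0, …, n-1}` carrying the sample path. Now `ξ_{K|m}` depends on the distribution only through
`P(U = m)`, `P(Z = ℓ, U = m)`, `E(1_{U=m} X)`, `E(1_{Z=ℓ,U=m} X)` and `E(1_{U=m} X ⊗ X)`. Their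
empirical versions converge almost surely by the strong law of large numbers, and `ξ_{K|m}` is
continuous in them at the true values, because `p_m` and `P(Z = ℓ, U = m)` are positive and
`A_K V_m A_K^*` is invertible when `V_m` is positive definite.
-/

open MeasureTheory Filter Finset ProbabilityTheory Matrix

noncomputable section

namespace ArxivStmt

variable {Ω : Type} [MeasurableSpace Ω]

/-- The rank-one operator `u ⊗ v : h ↦ ⟨u, h⟩ v` on `ℝ^p`, as a matrix. -/
def tensor {p : ℕ} (u v : Fin p → ℝ) : Matrix (Fin p) (Fin p) ℝ :=
  Matrix.of fun i j => v i * u j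

/-- The coordinate projection `A_K : ℝ^p → ℝ^{card K}`, `x ↦ (x_i)_{i ∈ K}`, as a matrix. -/
def AK {p : ℕ} (K : Finset (Fin p)) : Matrix {x // x ∈ K} (Fin p) ℝ :=
  Matrix.of fun k j => if (k : Fin p) = j then 1 else 0

/-- `Q_{K} = A_K^* (A_K V A_K^*)⁻¹ A_K`. -/
def QK {p : ℕ} (K : Finset (Fin p)) (V : Matrix (Fin p) (Fin p) ℝ) : Matrix (Fin p) (Fin p) ℝ :=
  (AK K)ᵀ * (AK K * V * (AK K)ᵀ)⁻¹ * AK K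

/-- Squared euclidean norm on `ℝ^p`. -/
def esq {p : ℕ} (v : Fin p → ℝ) : ℝ := ∑ i, v i ^ 2

/-- `K_i = I ∖ {i}`. -/
def Kc {p : ℕ} (i : Fin p) : Finset (Fin p) := Finset.univ.erase i

/-- `p_m = P(U = m)`. -/
def pU {M : ℕ} (P : Measure Ω) (U : Ω → Fin M) (m : Fin M) : ℝ := (P {ω | U ω = m}).toReal

/-- `P(Z = ℓ, U = m)`. -/
def pZU {M q : ℕ} (P : Measure Ω) (U : Ω → Fin M) (Z : Ω → Fin q) (l : Fin q) (m : Fin M) : ℝ :=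
  (P {ω | Z ω = l ∧ U ω = m}).toReal

/-- `p_{ℓ|m} = P(Z = ℓ | U = m)`. -/
def pcond {M q : ℕ} (P : Measure Ω) (U : Ω → Fin M) (Z : Ω → Fin q) (l : Fin q) (m : Fin M) : ℝ :=
  pZU P U Z l m / pU P U m

/-- `μ_m = E(1_{U=m} X) / p_m`. -/
def muU {p M : ℕ} (P : Measure Ω) (X : Ω → Fin p → ℝ) (U : Ω → Fin M) (m : Fin M) :
    Fin p → ℝ :=
  fun i => (pU P U m)⁻¹ * ∫ ω, (if U ω = m then X ω i else 0) ∂P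

/-- `μ_{ℓ,m} = E(1_{Z=ℓ,U=m} X) / P(Z=ℓ,U=m)`. -/
def muZU {p M q : ℕ} (P : Measure Ω) (X : Ω → Fin p → ℝ) (U : Ω → Fin M) (Z : Ω → Fin q)
    (l : Fin q) (m : Fin M) : Fin p → ℝ :=
  fun i => (pZU P U Z l m)⁻¹ * ∫ ω, (if Z ω = l ∧ U ω = m then X ω i else 0) ∂P

/-- `V_m = E(1_{U=m} (X - μ_m) ⊗ (X - μ_m)) / p_m`. -/
def VU {p M : ℕ} (P : Measure Ω) (X : Ω → Fin p → ℝ) (U : Ω → Fin M) (m : Fin M) :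
    Matrix (Fin p) (Fin p) ℝ :=
  Matrix.of fun i j => (pU P U m)⁻¹ *
    ∫ ω, (if U ω = m then (X ω i - muU P X U m i) * (X ω j - muU P X U m j) else 0) ∂P

/-- `ξ_{K|m} = Σ_ℓ p_{ℓ|m}² ‖(I - V_m Q_{K|m})(μ_{ℓ,m} - μ_m)‖²`. -/
def xiKm {p M q : ℕ} (P : Measure Ω) (X : Ω → Fin p → ℝ) (U : Ω → Fin M) (Z : Ω → Fin q)
    (K : Finset (Fin p)) (m : Fin M) : ℝ :=
  ∑ l : Fin q, pcond P U Z l m ^ 2 *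
    esq ((1 - VU P X U m * QK K (VU P X U m)) *ᵥ (muZU P X U Z l m - muU P X U m))

/-- `ξ_K = Σ_m p_m² ξ_{K|m}`. -/
def xiK {p M q : ℕ} (P : Measure Ω) (X : Ω → Fin p → ℝ) (U : Ω → Fin M) (Z : Ω → Fin q)
    (K : Finset (Fin p)) : ℝ :=
  ∑ m : Fin M, pU P U m ^ 2 * xiKm P X U Z K m

/-! Empirical (sample) quantities. -/

/-- `N̂_m^{(n)}`. -/
def NU {M : ℕ} (Us : ℕ → Ω → Fin M) (m : Fin M) (n : ℕ) (ω : Ω) : ℝ :=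
  ∑ i ∈ Finset.range n, if Us i ω = m then 1 else 0

/-- `N̂_{ℓ,m}^{(n)}`. -/
def NZU {M q : ℕ} (Us : ℕ → Ω → Fin M) (Zs : ℕ → Ω → Fin q) (l : Fin q) (m : Fin M)
    (n : ℕ) (ω : Ω) : ℝ :=
  ∑ i ∈ Finset.range n, if Zs i ω = l ∧ Us i ω = m then 1 else 0

/-- `p̂_m^{(n)} = N̂_m^{(n)} / n`. -/
def pUhat {M : ℕ} (Us : ℕ → Ω → Fin M) (m : Fin M) (n : ℕ) (ω : Ω) : ℝ :=
  NU Us m n ω / n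

/-- `p̂_{ℓ|m}^{(n)} = N̂_{ℓ,m}^{(n)} / N̂_m^{(n)}`. -/
def pcondhat {M q : ℕ} (Us : ℕ → Ω → Fin M) (Zs : ℕ → Ω → Fin q) (l : Fin q) (m : Fin M)
    (n : ℕ) (ω : Ω) : ℝ :=
  NZU Us Zs l m n ω / NU Us m n ω

/-- `μ̂_m^{(n)}`. -/
def muUhat {p M : ℕ} (Xs : ℕ → Ω → Fin p → ℝ) (Us : ℕ → Ω → Fin M) (m : Fin M)
    (n : ℕ) (ω : Ω) : Fin p → ℝ :=
  fun j => (NU Us m n ω)⁻¹ * ∑ i ∈ Finset.range n, if Us i ω = m then Xs i ω j else 0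

/-- `μ̂_{ℓ,m}^{(n)}`. -/
def muZUhat {p M q : ℕ} (Xs : ℕ → Ω → Fin p → ℝ) (Us : ℕ → Ω → Fin M) (Zs : ℕ → Ω → Fin q)
    (l : Fin q) (m : Fin M) (n : ℕ) (ω : Ω) : Fin p → ℝ :=
  fun j => (NZU Us Zs l m n ω)⁻¹ *
    ∑ i ∈ Finset.range n, if Zs i ω = l ∧ Us i ω = m then Xs i ω j else 0

/-- `V̂_m^{(n)}`. -/
def VUhat {p M : ℕ} (Xs : ℕ → Ω → Fin p → ℝ) (Us : ℕ → Ω → Fin M) (m : Fin M)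
    (n : ℕ) (ω : Ω) : Matrix (Fin p) (Fin p) ℝ :=
  Matrix.of fun a b => (NU Us m n ω)⁻¹ * ∑ i ∈ Finset.range n,
    if Us i ω = m then
      (Xs i ω a - muUhat Xs Us m n ω a) * (Xs i ω b - muUhat Xs Us m n ω b) else 0

/-- `ξ̂_{K|m}^{(n)}`. -/
def xiKmhat {p M q : ℕ} (Xs : ℕ → Ω → Fin p → ℝ) (Us : ℕ → Ω → Fin M) (Zs : ℕ → Ω → Fin q)
    (K : Finset (Fin p)) (m : Fin M) (n : ℕ) (ω : Ω) : ℝ :=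
  ∑ l : Fin q, pcondhat Us Zs l m n ω ^ 2 *
    esq ((1 - VUhat Xs Us m n ω * QK K (VUhat Xs Us m n ω)) *ᵥ
      (muZUhat Xs Us Zs l m n ω - muUhat Xs Us m n ω))

/-- `ξ̂_K^{(n)}`. -/
def xiKhat {p M q : ℕ} (Xs : ℕ → Ω → Fin p → ℝ) (Us : ℕ → Ω → Fin M) (Zs : ℕ → Ω → Fin q)
    (K : Finset (Fin p)) (n : ℕ) (ω : Ω) : ℝ :=
  ∑ m : Fin M, pUhat Us m n ω ^ 2 * xiKmhat Xs Us Zs K m n ω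

/-- i.i.d. sample with the distribution of `(X, U, Z)`. -/
def IsIIDSample {p M q : ℕ} (P : Measure Ω) (X : Ω → Fin p → ℝ) (U : Ω → Fin M)
    (Z : Ω → Fin q) (Xs : ℕ → Ω → Fin p → ℝ) (Us : ℕ → Ω → Fin M) (Zs : ℕ → Ω → Fin q) :
    Prop :=
  (∀ i, Measurable fun ω => (Xs i ω, Us i ω, Zs i ω)) ∧
  iIndepFun (fun i ω => (Xs i ω, Us i ω, Zs i ω)) P ∧
  ∀ i, IdentDistrib (fun ω => (Xs i ω, Us i ω, Zs i ω)) (fun ω => (X ω, U ω, Z ω)) P P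


/-- i.i.d. sample with the distribution of `(X, U)`. -/
def IsIIDSample2 {p M : ℕ} (P : Measure Ω) (X : Ω → Fin p → ℝ) (U : Ω → Fin M)
    (Xs : ℕ → Ω → Fin p → ℝ) (Us : ℕ → Ω → Fin M) : Prop :=
  (∀ i, Measurable fun ω => (Xs i ω, Us i ω)) ∧
  iIndepFun (fun i ω => (Xs i ω, Us i ω)) P ∧
  ∀ i, IdentDistrib (fun ω => (Xs i ω, Us i ω)) (fun ω => (X ω, U ω)) P P


open scoped Topology

lemma integral_ite_eq_setIntegral (P : Measure Ω) {c : Ω → Prop} [DecidablePred c]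
    (hc : MeasurableSet {ω | c ω}) (f : Ω → ℝ) :
    ∫ ω, (if c ω then f ω else 0) ∂P = ∫ ω in {ω | c ω}, f ω ∂P := by
  rw [← integral_indicator hc]
  simp only [Set.indicator_apply, Set.mem_ofPred_eq]

lemma toReal_measure_eq_integral_ite (P : Measure Ω) {c : Ω → Prop} [DecidablePred c]
    (hc : MeasurableSet {ω | c ω}) :
    (P {ω | c ω}).toReal = ∫ ω, (if c ω then 1 else 0) ∂P := by
  simp [integral_ite_eq_setIntegral P hc, measureReal_def]

lemma integral_sub_mul_sub (μ : Measure Ω) [IsFiniteMeasure μ] {f g : Ω → ℝ}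
    (hf : MemLp f 2 μ) (hg : MemLp g 2 μ) (a b : ℝ) :
    ∫ ω, (f ω - a) * (g ω - b) ∂μ =
      ∫ ω, f ω * g ω ∂μ - b * ∫ ω, f ω ∂μ - a * ∫ ω, g ω ∂μ + a * b * μ.real Set.univ := by
  have hf₁ : Integrable (fun ω => b * f ω) μ := (hf.integrable one_le_two).const_mul b
  have hg₁ : Integrable (fun ω => a * g ω) μ := (hg.integrable one_le_two).const_mul a
  have hfg : Integrable (fun ω => f ω * g ω) μ := hf.integrable_mul hg
  have hfgs : Integrable (fun ω => f ω * g ω - b * f ω) μ := hfg.sub hf₁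
  have hfgss : Integrable (fun ω => f ω * g ω - b * f ω - a * g ω) μ := hfgs.sub hg₁
  calc ∫ ω, (f ω - a) * (g ω - b) ∂μ = ∫ ω, (f ω * g ω - b * f ω - a * g ω + a * b) ∂μ := by
        congr 1; ext ω; ring
    _ = _ := by
        rw [integral_add hfgss (integrable_const _),
          integral_sub hfgs hg₁, integral_sub hfg hf₁, integral_const_mul,
          integral_const_mul, integral_const, smul_eq_mul, mul_comm (μ.real _)]

lemma integrable_ite_zero {P : Measure Ω} {c : Ω → Prop} [DecidablePred c]
    (hc : MeasurableSet {ω | c ω}) {g : Ω → ℝ} (hg : Integrable g P) :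
    Integrable (fun ω => if c ω then g ω else 0) P := by
  refine (hg.indicator hc).congr (ae_of_all _ fun ω => ?_)
  simp [Set.indicator_apply]

lemma memLp_two_apply_of_integrable_sum_sq_sq (P : Measure Ω) [IsFiniteMeasure P] {p : ℕ}
    {X : Ω → Fin p → ℝ} (hX : Measurable X)
    (hmom : Integrable (fun ω => (∑ i, X ω i ^ 2) ^ 2) P) (j : Fin p) :
    MemLp (fun ω => X ω j) 2 P := by
  have hsum : Measurable fun ω => ∑ i, X ω i ^ 2 := by fun_prop
  have hint : Integrable (fun ω => ∑ i, X ω i ^ 2) P :=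
    ((memLp_two_iff_integrable_sq hsum.aestronglyMeasurable).2 hmom).integrable one_le_two
  refine (memLp_two_iff_integrable_sq (by fun_prop)).2 <|
    hint.mono' (by fun_prop) (ae_of_all _ fun ω => ?_)
  rw [Real.norm_of_nonneg (sq_nonneg _)]
  exact single_le_sum (f := fun i => X ω i ^ 2) (fun i _ => sq_nonneg _) (mem_univ j)

lemma VU_apply_eq (P : Measure Ω) [IsFiniteMeasure P] {p M : ℕ} {X : Ω → Fin p → ℝ}
    {U : Ω → Fin M} {m : Fin M} (hm : MeasurableSet {ω | U ω = m})
    (hX : ∀ j, MemLp (fun ω => X ω j) 2 P) (hp : pU P U m ≠ 0) (a b : Fin p) :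
    VU P X U m a b = (pU P U m)⁻¹ * ∫ ω, (if U ω = m then X ω a * X ω b else 0) ∂P
      - muU P X U m a * muU P X U m b := by
  have hfirst : ∀ j, ∫ ω in {ω | U ω = m}, X ω j ∂P = pU P U m * muU P X U m j := fun j => by
    rw [muU, integral_ite_eq_setIntegral P hm, mul_inv_cancel_left₀ hp]
  have hmass : (P.restrict {ω | U ω = m}).real Set.univ = pU P U m := by
    simp [pU, measureReal_def]
  rw [VU, of_apply, integral_ite_eq_setIntegral P hm, integral_ite_eq_setIntegral P hm,
    integral_sub_mul_sub _ ((hX a).restrict _) ((hX b).restrict _), hfirst, hfirst, hmass]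
  field_simp
  ring

lemma integrableOn_finset_count (s : Finset ℕ) (f : ℕ → ℝ) : IntegrableOn f s Measure.count :=
  Measure.integrableOn_of_bounded (M := ∑ i ∈ s, |f i|) (by simp) .of_discrete <|
    (ae_restrict_iff' s.measurableSet).2 <| ae_of_all _ fun i hi =>
      single_le_sum (f := fun i => |f i|) (fun _ _ => abs_nonneg _) hi

lemma integral_uniformOn_range (n : ℕ) (f : ℕ → ℝ) :
    ∫ i, f i ∂uniformOn (range n : Set ℕ) = (∑ i ∈ range n, f i) / n := by
  rw [uniformOn, ProbabilityTheory.cond, integral_smul_measure,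
    setIntegral_finset _ (integrableOn_finset_count _ f), Measure.count_apply_finset]
  simp [div_eq_inv_mul]

lemma memLp_uniformOn_range (n : ℕ) (f : ℕ → ℝ) : MemLp f 2 (uniformOn (range n : Set ℕ)) := by
  refine (memLp_two_iff_integrable_sq .of_discrete).2 ?_
  rcases eq_or_ne n 0 with rfl | hn
  · simp
  · exact (integrableOn_finset_count _ _).smul_measure (by simpa using hn)

lemma xiKmhat_eq_xiKm_uniformOn {Ω : Type} {p M q : ℕ} (Xs : ℕ → Ω → Fin p → ℝ)
    (Us : ℕ → Ω → Fin M) (Zs : ℕ → Ω → Fin q) (K : Finset (Fin p)) (m : Fin M) {n : ℕ}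
    (hn : n ≠ 0) (ω : Ω) :
    xiKmhat Xs Us Zs K m n ω =
      xiKm (uniformOn (range n : Set ℕ)) (Xs · ω) (Us · ω) (Zs · ω) K m := by
  have hn' : (n : ℝ) ≠ 0 := Nat.cast_ne_zero.2 hn
  have hpU : pU (uniformOn (range n : Set ℕ)) (Us · ω) m = NU Us m n ω / n := by
    rw [pU, toReal_measure_eq_integral_ite _ .of_discrete, integral_uniformOn_range, NU]
  have hpZU : ∀ l, pZU (uniformOn (range n : Set ℕ)) (Us · ω) (Zs · ω) l m =
      NZU Us Zs l m n ω / n := fun l => by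
    rw [pZU, toReal_measure_eq_integral_ite _ .of_discrete, integral_uniformOn_range, NZU]
  have hmuU : muU (uniformOn (range n : Set ℕ)) (Xs · ω) (Us · ω) m = muUhat Xs Us m n ω := by
    ext j
    rw [muU, muUhat, hpU, integral_uniformOn_range, inv_mul_eq_div, inv_mul_eq_div,
      div_div_div_cancel_right₀ hn']
  have hmuZU : ∀ l, muZU (uniformOn (range n : Set ℕ)) (Xs · ω) (Us · ω) (Zs · ω) l m =
      muZUhat Xs Us Zs l m n ω := fun l => by
    ext j
    rw [muZU, muZUhat, hpZU, integral_uniformOn_range, inv_mul_eq_div, inv_mul_eq_div,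
      div_div_div_cancel_right₀ hn']
  have hVU : VU (uniformOn (range n : Set ℕ)) (Xs · ω) (Us · ω) m = VUhat Xs Us m n ω := by
    ext a b
    rw [VU, VUhat, of_apply, of_apply, hmuU, hpU, integral_uniformOn_range, inv_mul_eq_div,
      inv_mul_eq_div, div_div_div_cancel_right₀ hn']
  have hpcond : ∀ l, pcond (uniformOn (range n : Set ℕ)) (Us · ω) (Zs · ω) l m =
      pcondhat Us Zs l m n ω := fun l => by
    rw [pcond, pcondhat, hpU, hpZU, div_div_div_cancel_right₀ hn']
  simp only [xiKm, xiKmhat, hpcond, hVU, hmuZU, hmuU]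

lemma injective_vecMul_AK {p : ℕ} (K : Finset (Fin p)) :
    Function.Injective fun v => v ᵥ* AK K := by
  intro v w h
  ext k
  simpa [vecMul, dotProduct, AK] using congrFun h k

lemma continuousAt_QK {p : ℕ} (K : Finset (Fin p)) {V : Matrix (Fin p) (Fin p) ℝ}
    (hV : V.PosDef) : ContinuousAt (QK K) V := by
  have hdet : (AK K * V * (AK K)ᵀ).det ≠ 0 := by
    simpa [conjTranspose_eq_transpose_of_trivial] using
      (hV.mul_mul_conjTranspose_same (injective_vecMul_AK K)).det_pos.ne'
  have hinv : ContinuousAt Inv.inv (AK K * V * (AK K)ᵀ) :=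
    continuousAt_matrix_inv _ (by rw [Ring.inverse_eq_inv']; exact continuousAt_inv₀ hdet)
  have hC : Continuous fun W : Matrix (Fin p) (Fin p) ℝ => AK K * W * (AK K)ᵀ :=
    (continuous_const.matrix_mul continuous_id).matrix_mul continuous_const
  have hL : Continuous fun Y : Matrix K K ℝ => (AK K)ᵀ * Y * AK K :=
    (continuous_const.matrix_mul continuous_id).matrix_mul continuous_const
  exact hL.continuousAt.comp (f := fun W => (AK K * W * (AK K)ᵀ)⁻¹)
    (hinv.comp (f := fun W => AK K * W * (AK K)ᵀ) hC.continuousAt)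

structure MomentsTendsto {Ω' : Type} [MeasurableSpace Ω'] {p M q : ℕ} (ν : ℕ → Measure Ω')
    (X' : Ω' → Fin p → ℝ) (U' : Ω' → Fin M) (Z' : Ω' → Fin q) (P : Measure Ω)
    (X : Ω → Fin p → ℝ) (U : Ω → Fin M) (Z : Ω → Fin q) (m : Fin M) : Prop where
  mass : Tendsto (fun n => pU (ν n) U' m) atTop (𝓝 (pU P U m))
  massZ : ∀ l, Tendsto (fun n => pZU (ν n) U' Z' l m) atTop (𝓝 (pZU P U Z l m))
  first : ∀ j, Tendsto (fun n => ∫ ω, (if U' ω = m then X' ω j else 0) ∂ν n) atTop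
    (𝓝 (∫ ω, (if U ω = m then X ω j else 0) ∂P))
  firstZ : ∀ l j, Tendsto (fun n => ∫ ω, (if Z' ω = l ∧ U' ω = m then X' ω j else 0) ∂ν n)
    atTop (𝓝 (∫ ω, (if Z ω = l ∧ U ω = m then X ω j else 0) ∂P))
  second : ∀ a b, Tendsto (fun n => ∫ ω, (if U' ω = m then X' ω a * X' ω b else 0) ∂ν n)
    atTop (𝓝 (∫ ω, (if U ω = m then X ω a * X ω b else 0) ∂P))

theorem MomentsTendsto.tendsto_xiKm {Ω' : Type} [MeasurableSpace Ω'] {p M q : ℕ}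
    {ν : ℕ → Measure Ω'} [∀ n, IsFiniteMeasure (ν n)] {X' : Ω' → Fin p → ℝ} {U' : Ω' → Fin M}
    {Z' : Ω' → Fin q} {P : Measure Ω} [IsFiniteMeasure P] {X : Ω → Fin p → ℝ} {U : Ω → Fin M}
    {Z : Ω → Fin q} {m : Fin M} (h : MomentsTendsto ν X' U' Z' P X U Z m)
    (hm' : MeasurableSet {ω | U' ω = m}) (hX' : ∀ n j, MemLp (fun ω => X' ω j) 2 (ν n))
    (hm : MeasurableSet {ω | U ω = m}) (hX : ∀ j, MemLp (fun ω => X ω j) 2 P)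
    (hp : pU P U m ≠ 0) (hpZ : ∀ l, pZU P U Z l m ≠ 0) (hV : (VU P X U m).PosDef)
    (K : Finset (Fin p)) :
    Tendsto (fun n => xiKm (ν n) X' U' Z' K m) atTop (𝓝 (xiKm P X U Z K m)) := by
  have hmuU : Tendsto (fun n => muU (ν n) X' U' m) atTop (𝓝 (muU P X U m)) :=
    tendsto_pi_nhds.2 fun j => (h.mass.inv₀ hp).mul (h.first j)
  have hmuZU : ∀ l, Tendsto (fun n => muZU (ν n) X' U' Z' l m) atTop (𝓝 (muZU P X U Z l m)) :=
    fun l => tendsto_pi_nhds.2 fun j => ((h.massZ l).inv₀ (hpZ l)).mul (h.firstZ l j)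
  have hVU : Tendsto (fun n => VU (ν n) X' U' m) atTop (𝓝 (VU P X U m)) := by
    refine tendsto_pi_nhds.2 fun a => tendsto_pi_nhds.2 fun b => ?_
    rw [VU_apply_eq P hm hX hp]
    refine Tendsto.congr' ?_ (((h.mass.inv₀ hp).mul (h.second a b)).sub
      ((tendsto_pi_nhds.1 hmuU a).mul (tendsto_pi_nhds.1 hmuU b)))
    filter_upwards [h.mass.eventually_ne hp] with n hn
    exact (VU_apply_eq (ν n) hm' (hX' n) hn a b).symm
  have hres : Tendsto (fun n => 1 - VU (ν n) X' U' m * QK K (VU (ν n) X' U' m)) atTop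
      (𝓝 (1 - VU P X U m * QK K (VU P X U m))) :=
    tendsto_const_nhds.sub (hVU.mul ((continuousAt_QK K hV).tendsto.comp hVU))
  have hesq : Continuous fun x : Matrix (Fin p) (Fin p) ℝ × (Fin p → ℝ) => esq (x.1 *ᵥ x.2) :=
    continuous_finsetSum _ fun i _ =>
      ((continuous_apply i).comp (continuous_fst.matrix_mulVec continuous_snd)).pow 2
  unfold xiKm
  refine tendsto_finsetSum _ fun l _ => ?_
  have hpcond : Tendsto (fun n => pcond (ν n) U' Z' l m) atTop (𝓝 (pcond P U Z l m)) :=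
    (h.massZ l).div h.mass hp
  have hnorm := (hesq.tendsto _).comp (hres.prodMk_nhds ((hmuZU l).sub hmuU))
  exact (hpcond.pow 2).mul hnorm

section Sample

variable {p M q : ℕ} {P : Measure Ω} {X : Ω → Fin p → ℝ} {U : Ω → Fin M} {Z : Ω → Fin q}
  {Xs : ℕ → Ω → Fin p → ℝ} {Us : ℕ → Ω → Fin M} {Zs : ℕ → Ω → Fin q}

lemma IsIIDSample.ae_tendsto_integral_uniformOn (hiid : IsIIDSample P X U Z Xs Us Zs)
    {f : (Fin p → ℝ) × Fin M × Fin q → ℝ} (hf : Measurable f)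
    (hint : Integrable (fun ω => f (X ω, U ω, Z ω)) P) :
    ∀ᵐ ω ∂P, Tendsto (fun n => ∫ i, f (Xs i ω, Us i ω, Zs i ω) ∂uniformOn (range n : Set ℕ))
      atTop (𝓝 (∫ ω, f (X ω, U ω, Z ω) ∂P)) := by
  obtain ⟨-, hindep, hident⟩ := hiid
  have hident' : ∀ i, IdentDistrib (fun ω => f (Xs i ω, Us i ω, Zs i ω))
      (fun ω => f (X ω, U ω, Z ω)) P P := fun i => (hident i).comp hf
  have h := strong_law_ae_real (fun i ω => f (Xs i ω, Us i ω, Zs i ω))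
    ((hident' 0).integrable_iff.2 hint) (fun i j hij => (hindep.indepFun hij).comp hf hf)
    (fun i => (hident' i).trans (hident' 0).symm)
  simp_rw [(hident' 0).integral_eq, ← integral_uniformOn_range] at h
  exact h

lemma IsIIDSample.ae_tendsto_measure_uniformOn [IsFiniteMeasure P]
    (hiid : IsIIDSample P X U Z Xs Us Zs) (hobs : Measurable fun ω => (X ω, U ω, Z ω))
    {c : (Fin p → ℝ) × Fin M × Fin q → Prop} [DecidablePred c] (hc : MeasurableSet {t | c t}) :
    ∀ᵐ ω ∂P, Tendsto
      (fun n => (uniformOn (range n : Set ℕ) {i | c (Xs i ω, Us i ω, Zs i ω)}).toReal)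
      atTop (𝓝 (P {ω | c (X ω, U ω, Z ω)}).toReal) := by
  have hc' : MeasurableSet {ω | c (X ω, U ω, Z ω)} := hobs hc
  simp_rw [toReal_measure_eq_integral_ite P hc',
    toReal_measure_eq_integral_ite _ (.of_discrete : MeasurableSet {i | c (Xs i _, _, _)})]
  exact hiid.ae_tendsto_integral_uniformOn (Measurable.ite hc measurable_const measurable_const)
    (integrable_ite_zero hc' (integrable_const (1 : ℝ)))

lemma IsIIDSample.ae_momentsTendsto [IsFiniteMeasure P] (hiid : IsIIDSample P X U Z Xs Us Zs)
    (hX : Measurable X) (hU : Measurable U) (hZ : Measurable Z)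
    (hX2 : ∀ j, MemLp (fun ω => X ω j) 2 P) (m : Fin M) :
    ∀ᵐ ω ∂P, MomentsTendsto (fun n => uniformOn (range n : Set ℕ)) (Xs · ω) (Us · ω) (Zs · ω)
      P X U Z m := by
  have hobs : Measurable fun ω => (X ω, U ω, Z ω) := hX.prodMk (hU.prodMk hZ)
  have hm : MeasurableSet {ω | U ω = m} := hU (measurableSet_singleton m)
  have hlm : ∀ l, MeasurableSet {ω | Z ω = l ∧ U ω = m} := fun l => by measurability
  have hmass := hiid.ae_tendsto_measure_uniformOn hobs
    (c := fun t => t.2.1 = m) (by measurability)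
  have hmassZ := ae_all_iff.2 fun l => hiid.ae_tendsto_measure_uniformOn hobs
    (c := fun t => t.2.2 = l ∧ t.2.1 = m) (by measurability)
  have hfirst := ae_all_iff.2 fun j => hiid.ae_tendsto_integral_uniformOn
    (f := fun t => if t.2.1 = m then t.1 j else 0)
    (Measurable.ite (by measurability) (by fun_prop) measurable_const)
    (integrable_ite_zero hm ((hX2 j).integrable one_le_two))
  have hfirstZ := ae_all_iff.2 fun l => ae_all_iff.2 fun j => hiid.ae_tendsto_integral_uniformOn
    (f := fun t => if t.2.2 = l ∧ t.2.1 = m then t.1 j else 0)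
    (Measurable.ite (by measurability) (by fun_prop) measurable_const)
    (integrable_ite_zero (hlm l) ((hX2 j).integrable one_le_two))
  have hsecond := ae_all_iff.2 fun a => ae_all_iff.2 fun b => hiid.ae_tendsto_integral_uniformOn
    (f := fun t => if t.2.1 = m then t.1 a * t.1 b else 0)
    (Measurable.ite (by measurability) (by fun_prop) measurable_const)
    (integrable_ite_zero hm ((hX2 a).integrable_mul (hX2 b)))
  filter_upwards [hmass, hmassZ, hfirst, hfirstZ, hsecond] with ω h₁ h₂ h₃ h₄ h₅
  exact ⟨h₁, h₂, h₃, h₄, h₅⟩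

end Sample

theorem stmt12_general
    {Ω : Type} [MeasurableSpace Ω] (P : Measure Ω) [IsProbabilityMeasure P]
    (p q M : ℕ)
    (X : Ω → Fin p → ℝ) (U : Ω → Fin M) (Z : Ω → Fin q)
    (hX : Measurable X) (hU : Measurable U) (hZ : Measurable Z)
    (hmom : Integrable (fun ω => (∑ i, X ω i ^ 2) ^ 2) P)
    (hpU : ∀ m, 0 < pU P U m) (hpZU : ∀ l m, 0 < pZU P U Z l m)
    (hV : ∀ m, (VU P X U m).PosDef)
    (Xs : ℕ → Ω → Fin p → ℝ) (Us : ℕ → Ω → Fin M) (Zs : ℕ → Ω → Fin q)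
    (hiid : IsIIDSample P X U Z Xs Us Zs)
    :
    ∀ (K : Finset (Fin p)), K.Nonempty → ∀ m : Fin M,
      ∀ᵐ ω ∂P,
        Tendsto (fun n => xiKmhat Xs Us Zs K m n ω) atTop (nhds (xiKm P X U Z K m)) := by
  intro K _ m
  have hX2 := memLp_two_apply_of_integrable_sum_sq_sq P hX hmom
  filter_upwards [hiid.ae_momentsTendsto hX hU hZ hX2 m] with ω hω
  refine (hω.tendsto_xiKm .of_discrete (fun n _ => memLp_uniformOn_range n _)
    (hU (measurableSet_singleton m)) hX2 (hpU m).ne' (fun l => (hpZU l m).ne') (hV m) K).congr'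
    ?_
  filter_upwards [eventually_ne_atTop 0] with n hn
  exact (xiKmhat_eq_xiKm_uniformOn Xs Us Zs K m hn ω).symm

/-- Lemma 2(i): almost sure consistency of `ξ̂_{K|m}`. -/
theorem stmt12
    {Ω : Type} [MeasurableSpace Ω] (P : Measure Ω) [IsProbabilityMeasure P]
    (p q M : ℕ) (hp : 1 ≤ p) (hq : 2 ≤ q) (hM : 1 ≤ M)
    (X : Ω → Fin p → ℝ) (U : Ω → Fin M) (Z : Ω → Fin q)
    (hX : Measurable X) (hU : Measurable U) (hZ : Measurable Z)
    (hmom : Integrable (fun ω => (∑ i, X ω i ^ 2) ^ 2) P)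
    (hpU : ∀ m, 0 < pU P U m) (hpZU : ∀ l m, 0 < pZU P U Z l m)
    (hV : ∀ m, (VU P X U m).PosDef)
    (Xs : ℕ → Ω → Fin p → ℝ) (Us : ℕ → Ω → Fin M) (Zs : ℕ → Ω → Fin q)
    (hiid : IsIIDSample P X U Z Xs Us Zs)
    :
    ∀ (K : Finset (Fin p)), K.Nonempty → ∀ m : Fin M,
      ∀ᵐ ω ∂P,
        Tendsto (fun n => xiKmhat Xs Us Zs K m n ω) atTop (nhds (xiKm P X U Z K m)) :=
  stmt12_general P p q M X U Z hX hU hZ hmom hpU hpZU hV Xs Us Zs hiid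

end ArxivStmt
end
end

section
/- (Lemma 2(ii)) For every nonempty K ⊆ I and every m ∈ {1,…,M}, there exist sequences of random operators (Φ̂_{ℓ,K|m}^{(n)})_{n≥1} from 𝓔 to ℝ and (Ψ̂_{ℓ,K|m}^{(n)})_{n≥1} from 𝓔 to ℝ^p, for ℓ = 1,…,q, which converge almost surely uniformly (in operator norm) to Φ_{ℓ,K|m} and Ψ_{ℓ,K|m} respectively, such that almost surely for all sufficiently large n: n ξ̂_{K|m}^{(n)} = Σ_{ℓ=1}^q ( Φ̂_{ℓ,K|m}^{(n)}(Ŵ^{(n)}) + p_{ℓ|m} ‖ Ψ̂_{ℓ,K|m}^{(n)}(Ŵ^{(n)}) + √n Δ_{ℓ,K|m} ‖ )². -/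
open MeasureTheory Filter Finset ProbabilityTheory Matrix

noncomputable section

namespace ArxivStmt

variable {Ω : Type} [MeasurableSpace Ω]

/-- The euclidean space `𝓔 = M_{qp,M}(ℝ) × ℝ^{pM} × ℝ^M × M_{q,M}(ℝ) × L(ℝ^p)^M`. -/
abbrev ESp (p q M : ℕ) : Type :=
  (Fin q → Fin M → (Fin p → ℝ)) × (Fin M → (Fin p → ℝ)) × (Fin M → ℝ) ×
    (Fin q → Fin M → ℝ) × (Fin M → (Fin p → Fin p → ℝ))

/-- The random element `𝒲_i` of `𝓔`. -/
def Wsample {p M q : ℕ} (Xs : ℕ → Ω → Fin p → ℝ) (Us : ℕ → Ω → Fin M)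
    (Zs : ℕ → Ω → Fin q) (i : ℕ) (ω : Ω) : ESp p q M :=
  (fun l m j => if Zs i ω = l ∧ Us i ω = m then Xs i ω j else 0,
   fun m j => if Us i ω = m then Xs i ω j else 0,
   fun m => if Us i ω = m then 1 else 0,
   fun l m => if Zs i ω = l ∧ Us i ω = m then 1 else 0,
   fun m a b => if Us i ω = m then Xs i ω a * Xs i ω b else 0)

/-- `E(𝒲)`, computed componentwise. -/
def EW {p M q : ℕ} (P : Measure Ω) (X : Ω → Fin p → ℝ) (U : Ω → Fin M)
    (Z : Ω → Fin q) : ESp p q M :=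
  (fun l m j => ∫ ω, (if Z ω = l ∧ U ω = m then X ω j else 0) ∂P,
   fun m j => ∫ ω, (if U ω = m then X ω j else 0) ∂P,
   fun m => ∫ ω, (if U ω = m then (1 : ℝ) else 0) ∂P,
   fun l m => ∫ ω, (if Z ω = l ∧ U ω = m then (1 : ℝ) else 0) ∂P,
   fun m a b => ∫ ω, (if U ω = m then X ω a * X ω b else 0) ∂P)

/-- `Ŵ^{(n)} = √n (n⁻¹ Σ_{i<n} 𝒲_i - E(𝒲))`. -/
def What {p M q : ℕ} (P : Measure Ω) (X : Ω → Fin p → ℝ) (U : Ω → Fin M) (Z : Ω → Fin q)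
    (Xs : ℕ → Ω → Fin p → ℝ) (Us : ℕ → Ω → Fin M) (Zs : ℕ → Ω → Fin q)
    (n : ℕ) (ω : Ω) : ESp p q M :=
  Real.sqrt n • ((n : ℝ)⁻¹ • (∑ i ∈ Finset.range n, Wsample Xs Us Zs i ω) - EW P X U Z)

/-- `Δ_{ℓ,K|m} = (I - V_m Q_{K|m})(μ_{ℓ,m} - μ_m)`. -/
def Delta {p M q : ℕ} (P : Measure Ω) (X : Ω → Fin p → ℝ) (U : Ω → Fin M) (Z : Ω → Fin q)
    (K : Finset (Fin p)) (l : Fin q) (m : Fin M) : Fin p → ℝ :=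
  (1 - VU P X U m * QK K (VU P X U m)) *ᵥ (muZU P X U Z l m - muU P X U m)

/-- The operator `Φ_{ℓ,K|m}`. -/
def PhiF {p M q : ℕ} (P : Measure Ω) (X : Ω → Fin p → ℝ) (U : Ω → Fin M) (Z : Ω → Fin q)
    (K : Finset (Fin p)) (l : Fin q) (m : Fin M) (T : ESp p q M) : ℝ :=
  (pU P U m)⁻¹ * (T.2.2.2.1 l m - T.2.2.1 m * pcond P U Z l m) *
    Real.sqrt (esq (Delta P X U Z K l m))

/-- The operator `Ψ_{ℓ,K|m}`. -/
def PsiF {p M q : ℕ} (P : Measure Ω) (X : Ω → Fin p → ℝ) (U : Ω → Fin M) (Z : Ω → Fin q)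
    (K : Finset (Fin p)) (l : Fin q) (m : Fin M) (T : ESp p q M) : Fin p → ℝ :=
  (pU P U m)⁻¹ •
    ((1 - VU P X U m * QK K (VU P X U m)) *ᵥ
      ((pcond P U Z l m)⁻¹ • (T.1 l m - T.2.2.2.1 l m • muZU P X U Z l m) -
        T.2.1 m + T.2.2.1 m • muU P X U m -
        (Matrix.of (T.2.2.2.2 m) -
            T.2.2.1 m • (VU P X U m + tensor (muU P X U m) (muU P X U m))) *ᵥ
          (QK K (VU P X U m) *ᵥ (muZU P X U Z l m - muU P X U m)) +
        tensor (T.2.1 m - T.2.2.1 m • muU P X U m) (muU P X U m) *ᵥ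
          (QK K (VU P X U m) *ᵥ (muZU P X U Z l m - muU P X U m)) +
        tensor (muU P X U m) (T.2.1 m - T.2.2.1 m • muU P X U m) *ᵥ
          (QK K (VU P X U m) *ᵥ (muZU P X U Z l m - muU P X U m))))

/-- The operator `Λ_{K|m}`. -/
def LamF {p M q : ℕ} (P : Measure Ω) (X : Ω → Fin p → ℝ) (U : Ω → Fin M) (Z : Ω → Fin q)
    (K : Finset (Fin p)) (m : Fin M) (T : ESp p q M) : ℝ :=
  2 * pU P U m * T.2.2.1 m * xiKm P X U Z K m

end ArxivStmt

/-!
Write `W̄ₙ` for the sample mean of the `𝒲ᵢ`, so that `Ŵ⁽ⁿ⁾ = √n (W̄ₙ - E𝒲)`. Reading a point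
`T ∈ 𝓔` as a vector of moments, every estimator entering `ξ̂_{K|m}` is a fixed function of `W̄ₙ`,
and the corresponding population quantity is the same function of `E𝒲`. For two moment vectors
`T₀, T` with nonzero cell probabilities and invertible `A_K V A_Kᵀ`, the linear maps
`Φ̂ = phiOp T₀ T` and `Ψ̂ = psiOp T₀ T` satisfy the exact identities
`Φ̂ (T - T₀) = (p̂_{ℓ|m} - p_{ℓ|m}) ‖Δ̂‖` and `Ψ̂ (T - T₀) = Δ̂ - Δ`, the second one because
`(I - V̂ Q̂) (I + (V̂ - V) Q) = I - V Q`. Hence `Φ̂(Ŵ) + p_{ℓ|m} ‖Ψ̂(Ŵ) + √n Δ‖ = √n p̂_{ℓ|m} ‖Δ̂‖`,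
and squaring and summing over `ℓ` gives `n ξ̂`. The operators depend continuously on `T` at
`T₀ = E𝒲`, and `W̄ₙ → E𝒲` almost surely by the strong law of large numbers.
-/

namespace ArxivStmt

variable {Ω : Type}

section LinearAlgebra

variable {p : ℕ}

lemma tensor_mulVec (u v x : Fin p → ℝ) : tensor u v *ᵥ x = (u ⬝ᵥ x) • v := by
  ext i
  simp only [tensor, mulVec, dotProduct, of_apply, Pi.smul_apply, smul_eq_mul, Finset.sum_mul]
  exact Finset.sum_congr rfl fun j _ => by ring

lemma AK_mul_transpose (K : Finset (Fin p)) : AK K * (AK K)ᵀ = 1 := by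
  ext k k'
  simp only [AK, mul_apply, transpose_apply, of_apply, one_apply, ite_mul, one_mul, zero_mul,
    Finset.sum_ite_eq, Finset.mem_univ, if_true, Subtype.ext_iff]
  split_ifs <;> simp_all

lemma AK_transpose_mulVec_injective (K : Finset (Fin p)) :
    Function.Injective (AK K)ᵀ.mulVec := fun x y h => by
  simpa [mulVec_mulVec, AK_mul_transpose] using congrArg (AK K *ᵥ ·) h

lemma posDef_AK_mul_mul_transpose (K : Finset (Fin p)) {V : Matrix (Fin p) (Fin p) ℝ}
    (hV : V.PosDef) : (AK K * V * (AK K)ᵀ).PosDef := by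
  simpa using hV.conjTranspose_mul_mul_same (AK_transpose_mulVec_injective K)

lemma QK_mul_mul_QK (K : Finset (Fin p)) (W₁ W W₂ : Matrix (Fin p) (Fin p) ℝ) :
    QK K W₁ * W * QK K W₂ =
      (AK K)ᵀ * ((AK K * W₁ * (AK K)ᵀ)⁻¹ * (AK K * W * (AK K)ᵀ) *
        (AK K * W₂ * (AK K)ᵀ)⁻¹) * AK K := by
  simp only [QK, Matrix.mul_assoc]

variable {K : Finset (Fin p)} {W W' : Matrix (Fin p) (Fin p) ℝ}

lemma QK_mul_mul_QK_of_left (h : IsUnit (AK K * W * (AK K)ᵀ).det) :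
    QK K W * W * QK K W' = QK K W' := by
  rw [QK_mul_mul_QK, nonsing_inv_mul _ h, Matrix.one_mul, QK, Matrix.mul_assoc]

lemma QK_mul_mul_QK_of_right (h : IsUnit (AK K * W' * (AK K)ᵀ).det) :
    QK K W * W' * QK K W' = QK K W := by
  rw [QK_mul_mul_QK, Matrix.mul_assoc _ (AK K * W' * (AK K)ᵀ), mul_nonsing_inv _ h,
    Matrix.mul_one, QK, Matrix.mul_assoc]

lemma one_sub_mul_QK_mul_one_add (h : IsUnit (AK K * W * (AK K)ᵀ).det)
    (h' : IsUnit (AK K * W' * (AK K)ᵀ).det) :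
    (1 - W * QK K W) * (1 + (W - W') * QK K W') = 1 - W' * QK K W' := by
  have e : W * QK K W * (W * QK K W') = W * QK K W' := calc
    _ = W * (QK K W * W * QK K W') := by simp only [Matrix.mul_assoc]
    _ = _ := by rw [QK_mul_mul_QK_of_left h]
  have e' : W * QK K W * (W' * QK K W') = W * QK K W := calc
    _ = W * (QK K W * W' * QK K W') := by simp only [Matrix.mul_assoc]
    _ = _ := by rw [QK_mul_mul_QK_of_right h']
  simp only [Matrix.mul_add, Matrix.sub_mul, Matrix.mul_sub, Matrix.one_mul, Matrix.mul_one, e, e']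
  abel

lemma continuousAt_QK_s13 (h : IsUnit (AK K * W * (AK K)ᵀ).det) : ContinuousAt (QK K) W := by
  have hinv : ContinuousAt Inv.inv (AK K * W * (AK K)ᵀ) :=
    continuousAt_matrix_inv _ (by simpa [Ring.inverse_eq_inv'] using continuousAt_inv₀ h.ne_zero)
  unfold QK
  fun_prop

def mulVecCLM : Matrix (Fin p) (Fin p) ℝ →ₗ[ℝ] (Fin p → ℝ) →L[ℝ] (Fin p → ℝ) :=
  LinearMap.toContinuousLinearMap.toLinearMap ∘ₗ Matrix.toLin'.toLinearMap

lemma mulVecCLM_apply (G : Matrix (Fin p) (Fin p) ℝ) (v : Fin p → ℝ) :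
    mulVecCLM G v = G *ᵥ v := rfl

lemma continuous_esq : Continuous (esq (p := p)) := by
  unfold esq
  fun_prop

lemma esq_nonneg (v : Fin p → ℝ) : 0 ≤ esq v :=
  Finset.sum_nonneg fun _ _ => sq_nonneg _

lemma norm_toLp_eq_sqrt_esq (v : Fin p → ℝ) :
    ‖(EuclideanSpace.equiv (Fin p) ℝ).symm v‖ = √(esq v) := by
  simp [EuclideanSpace.norm_eq, esq]

end LinearAlgebra

lemma sub_sub_sub_smul_inv_smul {E : Type*} [AddCommGroup E] [Module ℝ E] {a a₀ : ℝ}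
    (ha : a ≠ 0) (ha₀ : a₀ ≠ 0) (x x₀ : E) :
    x - x₀ - (a - a₀) • a₀⁻¹ • x₀ = a • (a⁻¹ • x - a₀⁻¹ • x₀) := by
  rw [smul_sub, smul_inv_smul₀ ha, sub_smul, smul_inv_smul₀ ha₀]
  abel

namespace ESp

variable {p q M : ℕ}

/- A point `T` of `𝓔` is read as a vector of moments: `T.2.2.1 m`, `T.2.2.2.1 l m`, `T.2.1 m`,
`T.1 l m` and `T.2.2.2.2 m` stand for `P(U = m)`, `P(Z = ℓ, U = m)`, `E(1_{U=m} X)`,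
`E(1_{Z=ℓ,U=m} X)` and `E(1_{U=m} X ⊗ X)`. -/

def condProb (T : ESp p q M) (l : Fin q) (m : Fin M) : ℝ := T.2.2.2.1 l m / T.2.2.1 m

def mean (T : ESp p q M) (m : Fin M) : Fin p → ℝ := (T.2.2.1 m)⁻¹ • T.2.1 m

def condMean (T : ESp p q M) (l : Fin q) (m : Fin M) : Fin p → ℝ :=
  (T.2.2.2.1 l m)⁻¹ • T.1 l m

def cov (T : ESp p q M) (m : Fin M) : Matrix (Fin p) (Fin p) ℝ :=
  (T.2.2.1 m)⁻¹ • Matrix.of (T.2.2.2.2 m) - tensor (mean T m) (mean T m)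

def delta (K : Finset (Fin p)) (T : ESp p q M) (l : Fin q) (m : Fin M) : Fin p → ℝ :=
  (1 - cov T m * QK K (cov T m)) *ᵥ (condMean T l m - mean T m)

def qMeanGap (K : Finset (Fin p)) (T : ESp p q M) (l : Fin q) (m : Fin M) : Fin p → ℝ :=
  QK K (cov T m) *ᵥ (condMean T l m - mean T m)

lemma cov_add_tensor_mean (T : ESp p q M) (m : Fin M) :
    cov T m + tensor (mean T m) (mean T m) = (T.2.2.1 m)⁻¹ • Matrix.of (T.2.2.2.2 m) :=
  sub_add_cancel _ _

def Regular (K : Finset (Fin p)) (T : ESp p q M) (l : Fin q) (m : Fin M) : Prop :=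
  T.2.2.1 m ≠ 0 ∧ T.2.2.2.1 l m ≠ 0 ∧ IsUnit (AK K * cov T m * (AK K)ᵀ).det

section Continuity

variable {K : Finset (Fin p)} {T₀ : ESp p q M} {l : Fin q} {m : Fin M}

lemma continuousAt_condProb (h : T₀.2.2.1 m ≠ 0) :
    ContinuousAt (fun T : ESp p q M => condProb T l m) T₀ := by
  unfold condProb
  exact ContinuousAt.div (by fun_prop) (by fun_prop) h

lemma continuousAt_mean (h : T₀.2.2.1 m ≠ 0) :
    ContinuousAt (fun T : ESp p q M => mean T m) T₀ := by
  unfold mean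
  exact ContinuousAt.smul (ContinuousAt.inv₀ (f := fun T : ESp p q M => T.2.2.1 m)
    (by fun_prop) h) (by fun_prop)

lemma continuousAt_condMean (h : T₀.2.2.2.1 l m ≠ 0) :
    ContinuousAt (fun T : ESp p q M => condMean T l m) T₀ := by
  unfold condMean
  exact ContinuousAt.smul (ContinuousAt.inv₀ (f := fun T : ESp p q M => T.2.2.2.1 l m)
    (by fun_prop) h) (by fun_prop)

lemma continuousAt_cov (h : T₀.2.2.1 m ≠ 0) :
    ContinuousAt (fun T : ESp p q M => cov T m) T₀ := by
  have hμ := continuousAt_mean h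
  have htensor : Continuous fun x : (Fin p → ℝ) × (Fin p → ℝ) => tensor x.1 x.2 :=
    continuous_matrixOf.2 (by fun_prop)
  exact ((ContinuousAt.inv₀ (f := fun T : ESp p q M => T.2.2.1 m) (by fun_prop) h).smul
    (continuous_matrixOf.2 (by fun_prop)).continuousAt).sub
    (htensor.continuousAt.comp (f := fun T => (mean T m, mean T m)) (hμ.prodMk hμ))

lemma continuousAt_one_sub_cov_mul_QK (h : T₀.2.2.1 m ≠ 0)
    (hdet : IsUnit (AK K * cov T₀ m * (AK K)ᵀ).det) :
    ContinuousAt (fun T : ESp p q M => 1 - cov T m * QK K (cov T m)) T₀ :=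
  continuousAt_const.sub ((continuousAt_cov h).mul
    ((continuousAt_QK_s13 hdet).comp (f := fun T => cov T m) (continuousAt_cov h)))

lemma continuousAt_delta (h : Regular K T₀ l m) :
    ContinuousAt (fun T : ESp p q M => delta K T l m) T₀ :=
  (continuous_fst.matrix_mulVec continuous_snd).continuousAt.comp
    ((continuousAt_one_sub_cov_mul_QK h.1 h.2.2).prodMk
      ((continuousAt_condMean h.2.1).sub (continuousAt_mean h.1)))

lemma Regular.eventually {α : Type*} {F : Filter α} {f : α → ESp p q M}
    (h : Regular K T₀ l m) (hf : Tendsto f F (nhds T₀)) : ∀ᶠ x in F, Regular K (f x) l m := by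
  have hdet : ContinuousAt (fun T : ESp p q M => (AK K * cov T m * (AK K)ᵀ).det) T₀ :=
    (by fun_prop : Continuous fun V : Matrix (Fin p) (Fin p) ℝ =>
      (AK K * V * (AK K)ᵀ).det).continuousAt.comp (continuousAt_cov h.1)
  have hprob := ((by fun_prop : Continuous fun T : ESp p q M => T.2.2.1 m).tendsto T₀).comp hf
  have hjoint := ((by fun_prop : Continuous fun T : ESp p q M => T.2.2.2.1 l m).tendsto T₀).comp hf
  filter_upwards [hprob.eventually_ne h.1, hjoint.eventually_ne h.2.1,
    (hdet.tendsto.comp hf).eventually_ne h.2.2.ne_zero] with x h3 h4 hdetx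
  exact ⟨h3, h4, hdetx.isUnit⟩

end Continuity

def devCondProb (T₀ : ESp p q M) (l : Fin q) (m : Fin M) : ESp p q M →L[ℝ] ℝ :=
  LinearMap.toContinuousLinearMap
    { toFun := fun D => D.2.2.2.1 l m - D.2.2.1 m * condProb T₀ l m
      map_add' := fun D D' => by simp only [Prod.snd_add, Prod.fst_add, Pi.add_apply]; ring
      map_smul' := fun c D => by
        simp only [Prod.smul_snd, Prod.smul_fst, Pi.smul_apply, smul_eq_mul, RingHom.id_apply]
        ring }

def devMean (T₀ : ESp p q M) (m : Fin M) : ESp p q M →L[ℝ] (Fin p → ℝ) :=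
  LinearMap.toContinuousLinearMap
    { toFun := fun D => D.2.1 m - D.2.2.1 m • mean T₀ m
      map_add' := fun D D' => by simp only [Prod.snd_add, Prod.fst_add, Pi.add_apply]; module
      map_smul' := fun c D => by
        simp only [Prod.smul_snd, Prod.smul_fst, Pi.smul_apply, smul_eq_mul, RingHom.id_apply]
        module }

def devCondMean (T₀ : ESp p q M) (l : Fin q) (m : Fin M) : ESp p q M →L[ℝ] (Fin p → ℝ) :=
  LinearMap.toContinuousLinearMap
    { toFun := fun D => D.1 l m - D.2.2.2.1 l m • condMean T₀ l m
      map_add' := fun D D' => by simp only [Prod.snd_add, Prod.fst_add, Pi.add_apply]; module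
      map_smul' := fun c D => by
        simp only [Prod.smul_snd, Prod.smul_fst, Pi.smul_apply, smul_eq_mul, RingHom.id_apply]
        module }

def psiCore (T₀ : ESp p q M) (m : Fin M) (u : Fin p → ℝ) : ESp p q M →L[ℝ] (Fin p → ℝ) :=
  LinearMap.toContinuousLinearMap
    { toFun := fun D =>
        -(D.2.1 m - D.2.2.1 m • mean T₀ m)
          - (Matrix.of (D.2.2.2.2 m) - D.2.2.1 m • (cov T₀ m + tensor (mean T₀ m) (mean T₀ m)))
            *ᵥ u
          + ((D.2.1 m - D.2.2.1 m • mean T₀ m) ⬝ᵥ u) • mean T₀ m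
      map_add' := fun D D' => by
        simp only [Prod.fst_add, Prod.snd_add, Pi.add_apply, add_smul, ← of_add_of,
          sub_mulVec, add_mulVec, sub_dotProduct, add_dotProduct]
        module
      map_smul' := fun c D => by
        simp only [Prod.smul_fst, Prod.smul_snd, Pi.smul_apply, RingHom.id_apply, ← smul_of,
          smul_eq_mul, sub_mulVec, smul_mulVec, sub_dotProduct, smul_dotProduct, mul_smul]
        module }

section Apply

variable (T₀ : ESp p q M) (l : Fin q) (m : Fin M) (D : ESp p q M)

lemma devCondProb_apply :
    devCondProb T₀ l m D = D.2.2.2.1 l m - D.2.2.1 m * condProb T₀ l m := rfl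

lemma devMean_apply : devMean T₀ m D = D.2.1 m - D.2.2.1 m • mean T₀ m := rfl

lemma devCondMean_apply :
    devCondMean T₀ l m D = D.1 l m - D.2.2.2.1 l m • condMean T₀ l m := rfl

lemma psiCore_apply (u : Fin p → ℝ) :
    psiCore T₀ m u D = -(D.2.1 m - D.2.2.1 m • mean T₀ m)
      - (Matrix.of (D.2.2.2.2 m) - D.2.2.1 m • (cov T₀ m + tensor (mean T₀ m) (mean T₀ m))) *ᵥ u
      + ((D.2.1 m - D.2.2.1 m • mean T₀ m) ⬝ᵥ u) • mean T₀ m := rfl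

end Apply

def phiOp (K : Finset (Fin p)) (T₀ T : ESp p q M) (l : Fin q) (m : Fin M) :
    ESp p q M →L[ℝ] ℝ :=
  ((T.2.2.1 m)⁻¹ * √(esq (delta K T l m))) • devCondProb T₀ l m

/-- `psiOp K T₀ T₀ l m` is `Ψ_{ℓ,K|m}`; in `psiOp K T₀ T l m` the factors `p_m⁻¹`, `p_{ℓ|m}⁻¹`,
`I - V_m Q_{K|m}` and the `μ_m` of the last rank-one term are taken from `T` instead. -/
def psiOp (K : Finset (Fin p)) (T₀ T : ESp p q M) (l : Fin q) (m : Fin M) :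
    ESp p q M →L[ℝ] EuclideanSpace ℝ (Fin p) :=
  (T.2.2.1 m)⁻¹ • (EuclideanSpace.equiv (Fin p) ℝ).symm.toContinuousLinearMap.comp
    ((mulVecCLM (1 - cov T m * QK K (cov T m))).comp
      ((condProb T l m)⁻¹ • devCondMean T₀ l m + psiCore T₀ m (qMeanGap K T₀ l m)
        + (mean T m ⬝ᵥ qMeanGap K T₀ l m) • devMean T₀ m))

variable {K : Finset (Fin p)} {T₀ T : ESp p q M} {l : Fin q} {m : Fin M}

section Increments

variable (h : T.2.2.1 m ≠ 0) (h₀ : T₀.2.2.1 m ≠ 0)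
include h h₀

lemma devCondProb_apply_sub :
    devCondProb T₀ l m (T - T₀) = T.2.2.1 m * (condProb T l m - condProb T₀ l m) := by
  simpa [devCondProb, condProb, div_eq_inv_mul] using
    sub_sub_sub_smul_inv_smul h h₀ (T.2.2.2.1 l m) (T₀.2.2.2.1 l m)

lemma devMean_apply_sub : devMean T₀ m (T - T₀) = T.2.2.1 m • (mean T m - mean T₀ m) :=
  sub_sub_sub_smul_inv_smul h h₀ (T.2.1 m) (T₀.2.1 m)

lemma psiCore_apply_sub (u : Fin p → ℝ) :
    psiCore T₀ m u (T - T₀) = T.2.2.1 m • (-(mean T m - mean T₀ m)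
      - (cov T m - cov T₀ m) *ᵥ u - (mean T m ⬝ᵥ u) • (mean T m - mean T₀ m)) := by
  have hS : Matrix.of ((T - T₀).2.2.2.2 m) - (T - T₀).2.2.1 m •
      (cov T₀ m + tensor (mean T₀ m) (mean T₀ m)) = T.2.2.1 m •
      (cov T m + tensor (mean T m) (mean T m) - (cov T₀ m + tensor (mean T₀ m) (mean T₀ m))) := by
    simpa [cov_add_tensor_mean] using sub_sub_sub_smul_inv_smul h h₀
      (Matrix.of (T.2.2.2.2 m)) (Matrix.of (T₀.2.2.2.2 m))
  have hμ := devMean_apply_sub (T₀ := T₀) h h₀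
  rw [devMean_apply] at hμ
  rw [psiCore_apply, hμ, hS]
  simp only [smul_mulVec, sub_mulVec, add_mulVec, tensor_mulVec, smul_dotProduct,
    sub_dotProduct]
  module

lemma phiOp_apply_sub :
    phiOp K T₀ T l m (T - T₀) = (condProb T l m - condProb T₀ l m) * √(esq (delta K T l m)) := by
  rw [phiOp, _root_.smul_apply, devCondProb_apply_sub h h₀, smul_eq_mul]
  field_simp

end Increments

lemma devCondMean_apply_sub (h : T.2.2.2.1 l m ≠ 0) (h₀ : T₀.2.2.2.1 l m ≠ 0) :
    devCondMean T₀ l m (T - T₀) = T.2.2.2.1 l m • (condMean T l m - condMean T₀ l m) :=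
  sub_sub_sub_smul_inv_smul h h₀ (T.1 l m) (T₀.1 l m)

section Expansion

variable (h : Regular K T l m) (h₀ : Regular K T₀ l m)
include h h₀

lemma psiOp_apply_sub :
    psiOp K T₀ T l m (T - T₀) =
      (EuclideanSpace.equiv (Fin p) ℝ).symm (delta K T l m - delta K T₀ l m) := by
  set u := qMeanGap K T₀ l m
  have hinner : (condProb T l m)⁻¹ • devCondMean T₀ l m (T - T₀) + psiCore T₀ m u (T - T₀)
      + (mean T m ⬝ᵥ u) • devMean T₀ m (T - T₀) = T.2.2.1 m •
        ((condMean T l m - mean T m) - ((condMean T₀ l m - mean T₀ m)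
          + (cov T m - cov T₀ m) *ᵥ u)) := by
    rw [devCondMean_apply_sub h.2.1 h₀.2.1, psiCore_apply_sub h.1 h₀.1,
      devMean_apply_sub h.1 h₀.1, condProb, inv_div, smul_smul, div_mul_cancel₀ _ h.2.1]
    module
  have hgap : (condMean T₀ l m - mean T₀ m) + (cov T m - cov T₀ m) *ᵥ u =
      (1 + (cov T m - cov T₀ m) * QK K (cov T₀ m)) *ᵥ (condMean T₀ l m - mean T₀ m) := by
    rw [add_mulVec, one_mulVec, ← mulVec_mulVec]
    rfl
  simp only [psiOp, _root_.smul_apply, ContinuousLinearMap.comp_apply, _root_.add_apply,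
    ContinuousLinearEquiv.coe_coe, mulVecCLM_apply]
  rw [hinner, hgap, mulVec_smul, map_smul, inv_smul_smul₀ h.1, mulVec_sub, mulVec_mulVec,
    one_sub_mul_QK_mul_one_add h.2.2 h₀.2.2]
  rfl

lemma sq_phiOp_add_mul_norm_psiOp {s : ℝ} (hs : 0 ≤ s) :
    (phiOp K T₀ T l m (s • (T - T₀)) + condProb T₀ l m *
        ‖psiOp K T₀ T l m (s • (T - T₀)) +
          s • (EuclideanSpace.equiv (Fin p) ℝ).symm (delta K T₀ l m)‖) ^ 2 =
      s ^ 2 * (condProb T l m ^ 2 * esq (delta K T l m)) := by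
  rw [map_smul, map_smul, phiOp_apply_sub h.1 h₀.1, psiOp_apply_sub h h₀,
    ← smul_add, ← map_add, sub_add_cancel, norm_smul, norm_toLp_eq_sqrt_esq,
    Real.norm_of_nonneg hs, smul_eq_mul]
  linear_combination (s ^ 2 * condProb T l m ^ 2) * Real.sq_sqrt (esq_nonneg (delta K T l m))

end Expansion

section OperatorContinuity

variable (h₀ : Regular K T₀ l m)
include h₀

lemma continuousAt_phiOp : ContinuousAt (fun T => phiOp K T₀ T l m) T₀ :=
  ((ContinuousAt.inv₀ (f := fun T : ESp p q M => T.2.2.1 m) (by fun_prop) h₀.1).mul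
    (Real.continuous_sqrt.continuousAt.comp
      (continuous_esq.continuousAt.comp (continuousAt_delta h₀)))).smul
    continuousAt_const

lemma continuousAt_psiOp : ContinuousAt (fun T => psiOp K T₀ T l m) T₀ := by
  have hs : ContinuousAt (fun T : ESp p q M => (condProb T l m)⁻¹) T₀ :=
    (continuousAt_condProb h₀.1).inv₀ (div_ne_zero h₀.2.1 h₀.1)
  have ht : ContinuousAt (fun T : ESp p q M => mean T m ⬝ᵥ qMeanGap K T₀ l m) T₀ :=
    (continuous_id.dotProduct continuous_const).continuousAt.comp (continuousAt_mean h₀.1)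
  exact (ContinuousAt.inv₀ (f := fun T : ESp p q M => T.2.2.1 m) (by fun_prop) h₀.1).smul
    (continuousAt_const.clm_comp
      ((mulVecCLM.continuous_of_finiteDimensional.continuousAt.comp
          (continuousAt_one_sub_cov_mul_QK h₀.1 h₀.2.2)).clm_comp
        (((hs.smul continuousAt_const).add continuousAt_const).add
          (ht.smul continuousAt_const))))

end OperatorContinuity

end ESp

section Integrability

variable [MeasurableSpace Ω] {P : Measure Ω}

lemma integrable_of_integrable_sq [IsFiniteMeasure P] {f : Ω → ℝ}
    (hf : AEStronglyMeasurable f P) (h : Integrable (fun ω => f ω ^ 2) P) : Integrable f P :=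
  ((memLp_two_iff_integrable_sq hf).2 h).integrable one_le_two

lemma memLp_two_apply {p : ℕ} {X : Ω → Fin p → ℝ} (hX : Measurable X)
    (h2 : Integrable (fun ω => ∑ i, X ω i ^ 2) P) (j : Fin p) : MemLp (fun ω => X ω j) 2 P := by
  refine (memLp_two_iff_integrable_sq (by fun_prop)).2 (h2.mono' (by fun_prop) ?_)
  filter_upwards with ω
  rw [Real.norm_of_nonneg (sq_nonneg _)]
  exact Finset.single_le_sum (fun i _ => sq_nonneg (X ω i)) (Finset.mem_univ j)

lemma integrable_ite {f : Ω → ℝ} (hf : Integrable f P) {c : Ω → Prop} [DecidablePred c]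
    (hc : MeasurableSet {ω | c ω}) : Integrable (fun ω => if c ω then f ω else 0) P := by
  refine (hf.indicator hc).congr (ae_of_all _ fun ω => ?_)
  simp [Set.indicator_apply]

lemma integral_ite_one {c : Ω → Prop} [DecidablePred c] (hc : MeasurableSet {ω | c ω}) :
    ∫ ω, (if c ω then (1 : ℝ) else 0) ∂P = P.real {ω | c ω} := by
  rw [← integral_indicator_one hc]
  congr 1
  ext ω
  simp [Set.indicator_apply]

end Integrability

section StrongLaw

variable {p q M : ℕ}

/-- `𝒲ᵢ = ofObs (Xᵢ, Uᵢ, Zᵢ)` definitionally. -/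
def ESp.ofObs (t : (Fin p → ℝ) × Fin M × Fin q) : ESp p q M :=
  (fun l m j => if t.2.2 = l ∧ t.2.1 = m then t.1 j else 0,
   fun m j => if t.2.1 = m then t.1 j else 0,
   fun m => if t.2.1 = m then 1 else 0,
   fun l m => if t.2.2 = l ∧ t.2.1 = m then 1 else 0,
   fun m a b => if t.2.1 = m then t.1 a * t.1 b else 0)

lemma ESp.measurable_ofObs : Measurable (ESp.ofObs (p := p) (q := q) (M := M)) := by
  have hU : ∀ m, MeasurableSet {t : (Fin p → ℝ) × Fin M × Fin q | t.2.1 = m} := fun m =>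
    measurable_snd.fst (measurableSet_singleton m)
  have hZU : ∀ l m, MeasurableSet {t : (Fin p → ℝ) × Fin M × Fin q | t.2.2 = l ∧ t.2.1 = m} :=
    fun l m => (measurable_snd.snd (measurableSet_singleton l)).inter (hU m)
  refine .prodMk ?_ (.prodMk ?_ (.prodMk ?_ (.prodMk ?_ ?_))) <;>
    refine measurable_pi_lambda _ fun l => ?_
  · exact measurable_pi_lambda _ fun m => measurable_pi_lambda _ fun j =>
      Measurable.ite (hZU l m) (by fun_prop) measurable_const
  · exact measurable_pi_lambda _ fun j => Measurable.ite (hU l) (by fun_prop) measurable_const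
  · exact Measurable.ite (hU l) measurable_const measurable_const
  · exact measurable_pi_lambda _ fun m => Measurable.ite (hZU l m) measurable_const measurable_const
  · exact measurable_pi_lambda _ fun a => measurable_pi_lambda _ fun b =>
      Measurable.ite (hU l) (by fun_prop) measurable_const

instance : BorelSpace (ESp p q M) := Prod.borelSpace

def sampleMean (Xs : ℕ → Ω → Fin p → ℝ) (Us : ℕ → Ω → Fin M) (Zs : ℕ → Ω → Fin q) (n : ℕ)
    (ω : Ω) : ESp p q M :=
  (n : ℝ)⁻¹ • ∑ i ∈ Finset.range n, Wsample Xs Us Zs i ω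

variable [MeasurableSpace Ω] {P : Measure Ω} {X : Ω → Fin p → ℝ} {U : Ω → Fin M}
  {Z : Ω → Fin q} (hX : Measurable X) (hU : Measurable U) (hZ : Measurable Z)
  (h2 : Integrable (fun ω => ∑ i, X ω i ^ 2) P)
include hX hU hZ h2

lemma integrable_ofObs [IsFiniteMeasure P] :
    Integrable (fun ω => ESp.ofObs (X ω, U ω, Z ω)) P := by
  have hU' : ∀ m, MeasurableSet {ω | U ω = m} := fun m => hU (measurableSet_singleton m)
  have hZU : ∀ l m, MeasurableSet {ω | Z ω = l ∧ U ω = m} := fun l m =>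
    (hZ (measurableSet_singleton l)).inter (hU' m)
  have hXj j : Integrable (fun ω => X ω j) P := (memLp_two_apply hX h2 j).integrable one_le_two
  have hXX a b : Integrable (fun ω => X ω a * X ω b) P :=
    (memLp_two_apply hX h2 a).integrable_mul (memLp_two_apply hX h2 b)
  refine .prodMk ?_ (.prodMk ?_ (.prodMk ?_ (.prodMk ?_ ?_))) <;>
    refine Integrable.of_eval fun l => ?_
  · exact .of_eval fun m => .of_eval fun j => integrable_ite (hXj j) (hZU l m)
  · exact .of_eval fun j => integrable_ite (hXj j) (hU' l)
  · exact integrable_ite (integrable_const 1) (hU' l)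
  · exact .of_eval fun m => integrable_ite (integrable_const 1) (hZU l m)
  · exact .of_eval fun a => .of_eval fun b => integrable_ite (hXX a b) (hU' l)

lemma integral_ofObs [IsFiniteMeasure P] : ∫ ω, ESp.ofObs (X ω, U ω, Z ω) ∂P = EW P X U Z := by
  have hI := integrable_ofObs hX hU hZ h2
  refine Prod.ext ?_ (Prod.ext ?_ (Prod.ext ?_ (Prod.ext ?_ ?_)))
  · ext l m j
    rw [fst_integral hI, eval_integral hI.fst.eval, eval_integral (hI.fst.eval l).eval,
      eval_integral ((hI.fst.eval l).eval m).eval]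
    rfl
  · ext m j
    rw [snd_integral hI, fst_integral hI.snd, eval_integral hI.snd.fst.eval,
      eval_integral (hI.snd.fst.eval m).eval]
    rfl
  · ext m
    rw [snd_integral hI, snd_integral hI.snd, fst_integral hI.snd.snd,
      eval_integral hI.snd.snd.fst.eval]
    rfl
  · ext l m
    rw [snd_integral hI, snd_integral hI.snd, snd_integral hI.snd.snd,
      fst_integral hI.snd.snd.snd, eval_integral hI.snd.snd.snd.fst.eval,
      eval_integral (hI.snd.snd.snd.fst.eval l).eval]
    rfl
  · ext m a b
    rw [snd_integral hI, snd_integral hI.snd, snd_integral hI.snd.snd,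
      snd_integral hI.snd.snd.snd, eval_integral hI.snd.snd.snd.snd.eval,
      eval_integral (hI.snd.snd.snd.snd.eval m).eval,
      eval_integral ((hI.snd.snd.snd.snd.eval m).eval a).eval]
    rfl

lemma ae_tendsto_sampleMean [IsProbabilityMeasure P] {Xs : ℕ → Ω → Fin p → ℝ}
    {Us : ℕ → Ω → Fin M} {Zs : ℕ → Ω → Fin q} (hiid : IsIIDSample P X U Z Xs Us Zs) :
    ∀ᵐ ω ∂P, Tendsto (fun n => sampleMean Xs Us Zs n ω) atTop (nhds (EW P X U Z)) := by
  obtain ⟨-, hindep, hident⟩ := hiid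
  have hid i : IdentDistrib (Wsample Xs Us Zs i) (fun ω => ESp.ofObs (X ω, U ω, Z ω)) P P :=
    (hident i).comp ESp.measurable_ofObs
  have hslln := strong_law_ae (Wsample Xs Us Zs)
    ((hid 0).integrable_iff.2 (integrable_ofObs hX hU hZ h2))
    (fun i j hij => (hindep.indepFun hij).comp ESp.measurable_ofObs ESp.measurable_ofObs)
    (fun i => (hid i).trans (hid 0).symm)
  rwa [(hid 0).integral_eq, integral_ofObs hX hU hZ h2] at hslln

end StrongLaw

section Population

variable [MeasurableSpace Ω] {p q M : ℕ} {P : Measure Ω} {X : Ω → Fin p → ℝ} {U : Ω → Fin M}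
  {Z : Ω → Fin q}

lemma EW_prob (hU : Measurable U) (m : Fin M) : (EW P X U Z).2.2.1 m = pU P U m :=
  integral_ite_one (hU (measurableSet_singleton m))

lemma EW_jointProb (hU : Measurable U) (hZ : Measurable Z) (l : Fin q) (m : Fin M) :
    (EW P X U Z).2.2.2.1 l m = pZU P U Z l m :=
  integral_ite_one ((hZ (measurableSet_singleton l)).inter (hU (measurableSet_singleton m)))

lemma condProb_EW (hU : Measurable U) (hZ : Measurable Z) (l : Fin q) (m : Fin M) :
    ESp.condProb (EW P X U Z) l m = pcond P U Z l m := by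
  rw [ESp.condProb, EW_prob hU, EW_jointProb hU hZ, pcond]

lemma mean_EW (hU : Measurable U) (m : Fin M) : ESp.mean (EW P X U Z) m = muU P X U m := by
  rw [ESp.mean, EW_prob hU]
  rfl

lemma condMean_EW (hU : Measurable U) (hZ : Measurable Z) (l : Fin q) (m : Fin M) :
    ESp.condMean (EW P X U Z) l m = muZU P X U Z l m := by
  rw [ESp.condMean, EW_jointProb hU hZ]
  rfl

lemma cov_EW [IsFiniteMeasure P] (hX : Measurable X) (hU : Measurable U)
    (h2 : Integrable (fun ω => ∑ i, X ω i ^ 2) P) {m : Fin M} (hpU : pU P U m ≠ 0) :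
    ESp.cov (EW P X U Z) m = VU P X U m := by
  have hUm : MeasurableSet {ω | U ω = m} := hU (measurableSet_singleton m)
  have hXj j : Integrable (fun ω => if U ω = m then X ω j else 0) P :=
    integrable_ite ((memLp_two_apply hX h2 j).integrable one_le_two) hUm
  have hone : ∫ ω, (if U ω = m then (1 : ℝ) else 0) ∂P = pU P U m := integral_ite_one hUm
  ext a b
  have hXX : Integrable (fun ω => if U ω = m then X ω a * X ω b else 0) P :=
    integrable_ite ((memLp_two_apply hX h2 a).integrable_mul (memLp_two_apply hX h2 b)) hUm
  have hsecond : (EW P X U Z).2.2.2.2 m a b = ∫ ω, (if U ω = m then X ω a * X ω b else 0) ∂P :=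
    rfl
  simp only [ESp.cov, VU, Matrix.sub_apply, Matrix.smul_apply, of_apply, tensor, smul_eq_mul,
    EW_prob hU, mean_EW hU]
  set μ := muU P X U m
  have hmean j : ∫ ω, (if U ω = m then X ω j else 0) ∂P = pU P U m * μ j := by
    simp only [μ, muU, mul_inv_cancel_left₀ hpU]
  have hexp : ∫ ω, (if U ω = m then (X ω a - μ a) * (X ω b - μ b) else 0) ∂P =
      ∫ ω, (if U ω = m then X ω a * X ω b else 0) ∂P - μ a * (pU P U m * μ b)
        - μ b * (pU P U m * μ a) + μ a * μ b * pU P U m := by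
    rw [← hmean, ← hmean, ← hone, ← integral_const_mul, ← integral_const_mul,
      ← integral_const_mul, ← integral_sub, ← integral_sub, ← integral_add]
    · congr 1
      ext ω
      split_ifs <;> ring
    all_goals first
      | exact hXX.sub ((hXj b).const_mul _) |>.sub ((hXj a).const_mul _)
      | exact hXX.sub ((hXj b).const_mul _)
      | exact hXX
      | exact (hXj _).const_mul _
      | exact (integrable_ite (integrable_const 1) hUm).const_mul _
  rw [hexp, hsecond]
  field_simp
  ring

variable [IsFiniteMeasure P] (hX : Measurable X) (hU : Measurable U) (hZ : Measurable Z)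
  (h2 : Integrable (fun ω => ∑ i, X ω i ^ 2) P) {m : Fin M} (hpU : pU P U m ≠ 0)
  (K : Finset (Fin p)) (l : Fin q)
include hX hU hZ h2 hpU

lemma regular_EW (hpZU : pZU P U Z l m ≠ 0) (hV : (VU P X U m).PosDef) :
    ESp.Regular K (EW P X U Z) l m := by
  refine ⟨(EW_prob hU m).trans_ne hpU, (EW_jointProb hU hZ l m).trans_ne hpZU, ?_⟩
  rw [cov_EW hX hU h2 hpU]
  exact (posDef_AK_mul_mul_transpose K hV).det_pos.ne'.isUnit

lemma delta_EW : ESp.delta K (EW P X U Z) l m = Delta P X U Z K l m := by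
  rw [ESp.delta, cov_EW hX hU h2 hpU, condMean_EW hU hZ, mean_EW hU, Delta]

lemma phiOp_EW_apply (T : ESp p q M) :
    ESp.phiOp K (EW P X U Z) (EW P X U Z) l m T = PhiF P X U Z K l m T := by
  rw [ESp.phiOp, _root_.smul_apply, ESp.devCondProb_apply, smul_eq_mul, EW_prob hU,
    condProb_EW hU hZ, delta_EW hX hU hZ h2 hpU, PhiF]
  exact mul_right_comm _ _ _

lemma psiOp_EW_apply (T : ESp p q M) :
    EuclideanSpace.equiv (Fin p) ℝ (ESp.psiOp K (EW P X U Z) (EW P X U Z) l m T) =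
      PsiF P X U Z K l m T := by
  simp only [ESp.psiOp, _root_.smul_apply, ContinuousLinearMap.comp_apply, _root_.add_apply,
    ContinuousLinearEquiv.coe_coe, mulVecCLM_apply, map_smul,
    ContinuousLinearEquiv.apply_symm_apply, ESp.devCondMean_apply, ESp.psiCore_apply,
    ESp.devMean_apply, ESp.qMeanGap, EW_prob hU, condProb_EW hU hZ, cov_EW hX hU h2 hpU,
    condMean_EW hU hZ, mean_EW hU]
  rw [PsiF, tensor_mulVec, tensor_mulVec]
  congr 2
  module

end Population

section Empirical

variable {p q M : ℕ} {Xs : ℕ → Ω → Fin p → ℝ} {Us : ℕ → Ω → Fin M} {Zs : ℕ → Ω → Fin q}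
  {n : ℕ} {ω : Ω} {l : Fin q} {m : Fin M}

lemma What_eq_smul_sub [MeasurableSpace Ω] {P : Measure Ω} {X : Ω → Fin p → ℝ}
    {U : Ω → Fin M} {Z : Ω → Fin q} :
    What P X U Z Xs Us Zs n ω = √n • (sampleMean Xs Us Zs n ω - EW P X U Z) := rfl

lemma sampleMean_condMom (j : Fin p) : (sampleMean Xs Us Zs n ω).1 l m j =
    (n : ℝ)⁻¹ * ∑ i ∈ Finset.range n, if Zs i ω = l ∧ Us i ω = m then Xs i ω j else 0 := by
  simp [sampleMean, Wsample, Prod.fst_sum, Finset.sum_apply]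

lemma sampleMean_mom (j : Fin p) : (sampleMean Xs Us Zs n ω).2.1 m j =
    (n : ℝ)⁻¹ * ∑ i ∈ Finset.range n, if Us i ω = m then Xs i ω j else 0 := by
  simp [sampleMean, Wsample, Prod.fst_sum, Prod.snd_sum, Finset.sum_apply]

lemma sampleMean_prob : (sampleMean Xs Us Zs n ω).2.2.1 m = (n : ℝ)⁻¹ * NU Us m n ω := by
  simp [sampleMean, Wsample, NU, Prod.fst_sum, Prod.snd_sum, Finset.sum_apply]

lemma sampleMean_jointProb :
    (sampleMean Xs Us Zs n ω).2.2.2.1 l m = (n : ℝ)⁻¹ * NZU Us Zs l m n ω := by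
  simp [sampleMean, Wsample, NZU, Prod.fst_sum, Prod.snd_sum, Finset.sum_apply]

lemma sampleMean_secondMom (a b : Fin p) : (sampleMean Xs Us Zs n ω).2.2.2.2 m a b =
    (n : ℝ)⁻¹ * ∑ i ∈ Finset.range n, if Us i ω = m then Xs i ω a * Xs i ω b else 0 := by
  simp [sampleMean, Wsample, Prod.snd_sum, Finset.sum_apply]

variable (hn : (n : ℝ) ≠ 0)
include hn

lemma condProb_sampleMean :
    ESp.condProb (sampleMean Xs Us Zs n ω) l m = pcondhat Us Zs l m n ω := by
  rw [ESp.condProb, sampleMean_prob, sampleMean_jointProb, mul_div_mul_left _ _ (inv_ne_zero hn),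
    pcondhat]

lemma mean_sampleMean : ESp.mean (sampleMean Xs Us Zs n ω) m = muUhat Xs Us m n ω := by
  ext j
  rw [ESp.mean, Pi.smul_apply, sampleMean_prob, sampleMean_mom, smul_eq_mul, mul_inv, inv_inv,
    mul_comm (n : ℝ), mul_assoc, mul_inv_cancel_left₀ hn, muUhat]

lemma condMean_sampleMean :
    ESp.condMean (sampleMean Xs Us Zs n ω) l m = muZUhat Xs Us Zs l m n ω := by
  ext j
  rw [ESp.condMean, Pi.smul_apply, sampleMean_jointProb, sampleMean_condMom, smul_eq_mul,
    mul_inv, inv_inv, mul_comm (n : ℝ), mul_assoc, mul_inv_cancel_left₀ hn, muZUhat]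

lemma cov_sampleMean (hN : NU Us m n ω ≠ 0) :
    ESp.cov (sampleMean Xs Us Zs n ω) m = VUhat Xs Us m n ω := by
  ext a b
  simp only [ESp.cov, Matrix.sub_apply, Matrix.smul_apply, of_apply, tensor, smul_eq_mul,
    mean_sampleMean hn, sampleMean_prob, sampleMean_secondMom, VUhat]
  set μ := muUhat Xs Us m n ω
  have hsum j : ∑ i ∈ Finset.range n, (if Us i ω = m then Xs i ω j else 0) = NU Us m n ω * μ j :=
    by simp only [μ, muUhat, mul_inv_cancel_left₀ hN]
  have hexp : ∑ i ∈ Finset.range n,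
      (if Us i ω = m then (Xs i ω a - μ a) * (Xs i ω b - μ b) else 0) =
      ∑ i ∈ Finset.range n, (if Us i ω = m then Xs i ω a * Xs i ω b else 0)
        - μ a * (NU Us m n ω * μ b) - μ b * (NU Us m n ω * μ a)
        + μ a * μ b * NU Us m n ω := by
    rw [← hsum, ← hsum, NU, Finset.mul_sum, Finset.mul_sum, Finset.mul_sum,
      ← Finset.sum_sub_distrib, ← Finset.sum_sub_distrib, ← Finset.sum_add_distrib]
    refine Finset.sum_congr rfl fun i _ => ?_
    split_ifs <;> ring
  rw [hexp]
  field_simp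
  ring

lemma xiKmhat_eq (K : Finset (Fin p)) (hN : NU Us m n ω ≠ 0) :
    xiKmhat Xs Us Zs K m n ω = ∑ l, ESp.condProb (sampleMean Xs Us Zs n ω) l m ^ 2 *
      esq (ESp.delta K (sampleMean Xs Us Zs n ω) l m) := by
  simp only [xiKmhat, ESp.delta, condProb_sampleMean hn, cov_sampleMean hn hN,
    condMean_sampleMean hn, mean_sampleMean hn]

end Empirical

theorem stmt13_general
    {Ω : Type} [MeasurableSpace Ω] (P : Measure Ω) [IsProbabilityMeasure P]
    (p q M : ℕ)
    (X : Ω → Fin p → ℝ) (U : Ω → Fin M) (Z : Ω → Fin q)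
    (hX : Measurable X) (hU : Measurable U) (hZ : Measurable Z)
    (hmom : Integrable (fun ω => (∑ i, X ω i ^ 2) ^ 2) P)
    (hpU : ∀ m, 0 < pU P U m) (hpZU : ∀ l m, 0 < pZU P U Z l m)
    (hV : ∀ m, (VU P X U m).PosDef)
    (Xs : ℕ → Ω → Fin p → ℝ) (Us : ℕ → Ω → Fin M) (Zs : ℕ → Ω → Fin q)
    (hiid : IsIIDSample P X U Z Xs Us Zs)
    (K : Finset (Fin p)) (m : Fin M) :
    ∃ (Phihat : Fin q → ℕ → Ω → (ESp p q M →L[ℝ] ℝ))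
      (Psihat : Fin q → ℕ → Ω → (ESp p q M →L[ℝ] EuclideanSpace ℝ (Fin p)))
      (Phi : Fin q → ESp p q M →L[ℝ] ℝ)
      (Psi : Fin q → ESp p q M →L[ℝ] EuclideanSpace ℝ (Fin p)),
      (∀ (l : Fin q) (T : ESp p q M), Phi l T = PhiF P X U Z K l m T) ∧
      (∀ (l : Fin q) (T : ESp p q M),
        EuclideanSpace.equiv (Fin p) ℝ (Psi l T) = PsiF P X U Z K l m T) ∧
      ∀ᵐ ω ∂P,
        (∀ l : Fin q, Tendsto (fun n => ‖Phihat l n ω - Phi l‖) atTop (nhds 0)) ∧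
        (∀ l : Fin q, Tendsto (fun n => ‖Psihat l n ω - Psi l‖) atTop (nhds 0)) ∧
        ∀ᶠ n : ℕ in atTop,
          (n : ℝ) * xiKmhat Xs Us Zs K m n ω =
            ∑ l : Fin q,
              (Phihat l n ω (What P X U Z Xs Us Zs n ω) +
                pcond P U Z l m *
                  ‖Psihat l n ω (What P X U Z Xs Us Zs n ω) +
                    Real.sqrt n •
                      (EuclideanSpace.equiv (Fin p) ℝ).symm (Delta P X U Z K l m)‖) ^ 2 := by
  have h2 := integrable_of_integrable_sq (by fun_prop) hmom
  set T₀ := EW P X U Z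
  have hT₀ l : ESp.Regular K T₀ l m :=
    regular_EW hX hU hZ h2 (hpU m).ne' K l (hpZU l m).ne' (hV m)
  refine ⟨fun l n ω => ESp.phiOp K T₀ (sampleMean Xs Us Zs n ω) l m,
    fun l n ω => ESp.psiOp K T₀ (sampleMean Xs Us Zs n ω) l m,
    fun l => ESp.phiOp K T₀ T₀ l m, fun l => ESp.psiOp K T₀ T₀ l m,
    phiOp_EW_apply hX hU hZ h2 (hpU m).ne' K, psiOp_EW_apply hX hU hZ h2 (hpU m).ne' K, ?_⟩
  filter_upwards [ae_tendsto_sampleMean hX hU hZ h2 hiid] with ω hω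
  refine ⟨fun l => tendsto_iff_norm_sub_tendsto_zero.1
      ((ESp.continuousAt_phiOp (hT₀ l)).tendsto.comp hω),
    fun l => tendsto_iff_norm_sub_tendsto_zero.1
      ((ESp.continuousAt_psiOp (hT₀ l)).tendsto.comp hω), ?_⟩
  -- `hreg` alone says nothing about `p̂_m` when `Fin q` is empty.
  have hprob := ((by fun_prop : Continuous fun T : ESp p q M => T.2.2.1 m).tendsto T₀).comp hω
  filter_upwards [hprob.eventually_ne (EW_prob hU m ▸ (hpU m).ne'),
    eventually_all.2 fun l => (hT₀ l).eventually hω] with n hn hreg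
  have hNU : (n : ℝ)⁻¹ * NU Us m n ω ≠ 0 := by rwa [← sampleMean_prob (Zs := Zs)]
  obtain ⟨hninv, hN⟩ := mul_ne_zero_iff.1 hNU
  rw [xiKmhat_eq (fun h => hninv (inv_eq_zero.2 h)) K hN, Finset.mul_sum, What_eq_smul_sub]
  refine Finset.sum_congr rfl fun l _ => ?_
  rw [← delta_EW hX hU hZ h2 (hpU m).ne' K l, ← condProb_EW (X := X) hU hZ l m,
    ESp.sq_phiOp_add_mul_norm_psiOp (hreg l) (hT₀ l) (Real.sqrt_nonneg n),
    Real.sq_sqrt (Nat.cast_nonneg n)]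

/-- Lemma 2(ii). -/
theorem stmt13
    {Ω : Type} [MeasurableSpace Ω] (P : Measure Ω) [IsProbabilityMeasure P]
    (p q M : ℕ) (hp : 1 ≤ p) (hq : 2 ≤ q) (hM : 1 ≤ M)
    (X : Ω → Fin p → ℝ) (U : Ω → Fin M) (Z : Ω → Fin q)
    (hX : Measurable X) (hU : Measurable U) (hZ : Measurable Z)
    (hmom : Integrable (fun ω => (∑ i, X ω i ^ 2) ^ 2) P)
    (hpU : ∀ m, 0 < pU P U m) (hpZU : ∀ l m, 0 < pZU P U Z l m)
    (hV : ∀ m, (VU P X U m).PosDef)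
    (Xs : ℕ → Ω → Fin p → ℝ) (Us : ℕ → Ω → Fin M) (Zs : ℕ → Ω → Fin q)
    (hiid : IsIIDSample P X U Z Xs Us Zs)
    (K : Finset (Fin p)) (hK : K.Nonempty) (m : Fin M) :
    ∃ (Phihat : Fin q → ℕ → Ω → (ESp p q M →L[ℝ] ℝ))
      (Psihat : Fin q → ℕ → Ω → (ESp p q M →L[ℝ] EuclideanSpace ℝ (Fin p)))
      (Phi : Fin q → ESp p q M →L[ℝ] ℝ)
      (Psi : Fin q → ESp p q M →L[ℝ] EuclideanSpace ℝ (Fin p)),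
      (∀ (l : Fin q) (T : ESp p q M), Phi l T = PhiF P X U Z K l m T) ∧
      (∀ (l : Fin q) (T : ESp p q M),
        EuclideanSpace.equiv (Fin p) ℝ (Psi l T) = PsiF P X U Z K l m T) ∧
      ∀ᵐ ω ∂P,
        (∀ l : Fin q, Tendsto (fun n => ‖Phihat l n ω - Phi l‖) atTop (nhds 0)) ∧
        (∀ l : Fin q, Tendsto (fun n => ‖Psihat l n ω - Psi l‖) atTop (nhds 0)) ∧
        ∀ᶠ n : ℕ in atTop,
          (n : ℝ) * xiKmhat Xs Us Zs K m n ω =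
            ∑ l : Fin q,
              (Phihat l n ω (What P X U Z Xs Us Zs n ω) +
                pcond P U Z l m *
                  ‖Psihat l n ω (What P X U Z Xs Us Zs n ω) +
                    Real.sqrt n •
                      (EuclideanSpace.equiv (Fin p) ℝ).symm (Delta P X U Z K l m)‖) ^ 2 :=
  stmt13_general P p q M X U Z hX hU hZ hmom hpU hpZU hV Xs Us Zs hiid K m

end ArxivStmt
end
end
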